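/- Let H be an n-dimensional Haar subspace of C(X) and suppose X contains at least n+1 points. Let x₁,…,x_{n+1} ∈ X be distinct points, let σ₁,…,σ_{n+1} ∈ {−1, +1}, and let λ₁,…,λ_{n+1} be positive real numbers such that Σ_{i=1}^{n+1} λᵢ σᵢ h(xᵢ) = 0 for all h ∈ H. Then for every h ∈ H with ‖h‖ = 1 one has max_{1≤i≤n+1} σᵢ h(xᵢ) > 0. -/
import Mathlib


/-- `H` is an `n`-dimensional Haar subspace of `C(X, ℝ)`: it has dimension `n`
and interpolation at any `n` distinct points is uniquely solvable in `H`. -/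
def IsHaarSubspace {X : Type*} [TopologicalSpace X] (n : ℕ)
    (H : Submodule ℝ C(X, ℝ)) : Prop :=
  Module.finrank ℝ H = n ∧
    ∀ x : Fin n → X, Function.Injective x → ∀ r : Fin n → ℝ,
      ∃! f : H, ∀ i, (f : C(X, ℝ)) (x i) = r i

/-- If `x₁, …, x_{n+1}` are distinct points, `σᵢ ∈ {−1, +1}` and `λᵢ > 0`
satisfy `∑ λᵢ σᵢ h(xᵢ) = 0` for all `h` in the `n`-dimensional Haar subspace
`H`, then every `h ∈ H` with `‖h‖ = 1` satisfies `max_i σᵢ h(xᵢ) > 0`. -/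
theorem haar_sign_max_pos
    {X : Type*} [TopologicalSpace X] [CompactSpace X] [T2Space X]
    {n : ℕ} (hn : 0 < n)
    (H : Submodule ℝ C(X, ℝ)) (hHaar : IsHaarSubspace n H)
    (hX : ∃ y : Fin (n + 1) → X, Function.Injective y)
    (x : Fin (n + 1) → X) (hx : Function.Injective x)
    (σ : Fin (n + 1) → ℝ) (hσ : ∀ i, σ i = 1 ∨ σ i = -1)
    (lam : Fin (n + 1) → ℝ) (hlam : ∀ i, 0 < lam i)
    (horth : ∀ h ∈ H, (∑ i, lam i * σ i * h (x i)) = 0) :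
    ∀ h ∈ H, ‖h‖ = 1 → 0 < ⨆ i : Fin (n + 1), σ i * h (x i) := by
  intro h hH hnorm
  by_contra hcon
  push_neg at hcon
  have hle : ∀ i, σ i * h (x i) ≤ 0 := fun i =>
    le_trans (le_ciSup (f := fun i => σ i * h (x i)) (Set.Finite.bddAbove (Set.finite_range _)) i) hcon
  have hzero : ∀ i, h (x i) = 0 := by
    have hsum : (∑ i, lam i * (σ i * h (x i))) = 0 := by
      have := horth h hH
      simpa [mul_assoc] using this
    have heach : ∀ i ∈ Finset.univ, lam i * (σ i * h (x i)) = 0 :=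
      (Finset.sum_eq_zero_iff_of_nonpos (fun i _ =>
        mul_nonpos_of_nonneg_of_nonpos (hlam i).le (hle i))).mp hsum
    intro i
    have := heach i (Finset.mem_univ i)
    rcases mul_eq_zero.mp this with h1 | h2
    · exact absurd h1 (hlam i).ne'
    · rcases mul_eq_zero.mp h2 with h3 | h4
      · rcases hσ i with hs | hs <;> simp [hs] at h3
      · exact h4
  obtain ⟨f, hf, huniq⟩ := hHaar.2 (x ∘ Fin.castSucc)
    (hx.comp (Fin.castSucc_injective n)) 0
  have h1 : (⟨h, hH⟩ : H) = f := huniq _ (fun i => hzero _)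
  have h2 : (0 : H) = f := huniq _ (fun i => by simp)
  have : h = 0 := by
    have := h1.trans h2.symm
    exact congrArg Subtype.val this
  rw [this] at hnorm
  simp at hnorm
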